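/- arXiv:0911.5263 — 2 statements merged into one kernel-verified Lean document; each statement's English description precedes it below -/
import Mathlib

section
/- Let A and B be nonempty closed subsets of a metric space (X,d) and let T : A∪B → A∪B be a cyclic contraction. Suppose A is boundedly compact and A is a Chebyshev set for proximinal points with respect to B. Then T has a unique best proximity point z in A, and the sequence {T^{2n}x} converges to z for every x ∈ A. -/
open Filter Metric

/-- The distance between two sets: `inf {d(x,y) : x ∈ A, y ∈ B}`. -/
noncomputable def setDist {X : Type*} [PseudoMetricSpace X] (A B : Set X) : ℝ :=
  sInf (Set.image2 dist A B)

/-- `T` is a cyclic contraction on `A ∪ B`. -/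
def CyclicContraction {X : Type*} [MetricSpace X] (A B : Set X) (T : X → X) : Prop :=
  Set.MapsTo T A B ∧ Set.MapsTo T B A ∧ ∃ k : ℝ, 0 < k ∧ k < 1 ∧
    ∀ x ∈ A, ∀ y ∈ B, dist (T x) (T y) ≤ k * dist x y + (1 - k) * setDist A B

/-- `A` is boundedly compact: every closed bounded subset of `A` is compact. -/
def BoundedlyCompact {X : Type*} [MetricSpace X] (A : Set X) : Prop :=
  ∀ S ⊆ A, IsClosed S → Bornology.IsBounded S → IsCompact S

/-- `A` is a Chebyshev set for proximinal points with respect to `B`: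
for any `x ∈ B` with `dist(x,A) = dist(A,B)`, the metric projection `P_A(x)`
is a singleton. -/
def ChebyshevForProximinal {X : Type*} [MetricSpace X] (A B : Set X) : Prop :=
  ∀ x ∈ B, Metric.infDist x A = setDist A B →
    ∃! y, y ∈ A ∧ dist x y = Metric.infDist x A


/-! The distances `d(Tⁿx, Tⁿ⁺¹x)` decrease geometrically to `dist(A,B)`, so the even orbit of a
point of `A` is bounded, hence relatively compact in `A`, and each of its cluster points `z` is a
best proximity point. For such `z`, both `z` and `T²z` are nearest points of `A` to `Tz`, so
`T²z = z` by the Chebyshev property; the contraction inequality for two best proximity points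
`z, z'` then forces `d(z, Tz') = dist(A,B)`, and the Chebyshev property gives `z = z'`.
A sequence in a compact set with a unique cluster point converges to it. -/

open Set Topology

section SetDist

variable {X : Type*} [PseudoMetricSpace X] {A B : Set X} {a b : X}

theorem setDist_le_dist (ha : a ∈ A) (hb : b ∈ B) : setDist A B ≤ dist a b :=
  csInf_le ⟨0, by rintro _ ⟨x, -, y, -, rfl⟩; exact dist_nonneg⟩ (mem_image2_of_mem ha hb)

theorem setDist_le_infDist (hA : A.Nonempty) (hb : b ∈ B) : setDist A B ≤ infDist b A :=
  (le_infDist hA).2 fun _ ha => (setDist_le_dist ha hb).trans_eq (dist_comm _ _)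

end SetDist

theorem tendsto_of_le_mul_add_one_sub_mul {d : ℕ → ℝ} {k D : ℝ} (hk₀ : 0 ≤ k) (hk₁ : k < 1)
    (hD : ∀ n, D ≤ d n) (hd : ∀ n, d (n + 1) ≤ k * d n + (1 - k) * D) :
    Tendsto d atTop (𝓝 D) := by
  have hgeom : ∀ n, d n ≤ k ^ n * (d 0 - D) + D := by
    intro n
    induction n with
    | zero => simp
    | succ n ih =>
      calc d (n + 1) ≤ k * d n + (1 - k) * D := hd n
        _ ≤ k * (k ^ n * (d 0 - D) + D) + (1 - k) * D := by gcongr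
        _ = k ^ (n + 1) * (d 0 - D) + D := by ring
  have hlim : Tendsto (fun n => k ^ n * (d 0 - D) + D) atTop (𝓝 D) := by
    simpa using ((tendsto_pow_atTop_nhds_zero_of_lt_one hk₀ hk₁).mul_const (d 0 - D)).add_const D
  exact tendsto_of_tendsto_of_tendsto_of_le_of_le tendsto_const_nhds hlim hD hgeom

section BestProximity

variable {X : Type*} [MetricSpace X] {A B : Set X} {T : X → X}

def IsBestProximityPoint (A B : Set X) (T : X → X) (z : X) : Prop :=
  dist z (T z) = setDist A B

theorem ChebyshevForProximinal.eq_of_dist_eq_setDist (hcheb : ChebyshevForProximinal A B)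
    {a a' b : X} (ha : a ∈ A) (ha' : a' ∈ A) (hb : b ∈ B) (h : dist b a = setDist A B)
    (h' : dist b a' = setDist A B) : a = a' := by
  have hbA : infDist b A = setDist A B :=
    le_antisymm (h ▸ infDist_le_dist_of_mem ha) (setDist_le_infDist ⟨a, ha⟩ hb)
  exact (hcheb b hb hbA).unique ⟨ha, h.trans hbA.symm⟩ ⟨ha', h'.trans hbA.symm⟩

namespace CyclicContraction

theorem setDist_le_dist_self_image (hTA : MapsTo T A B) (hTB : MapsTo T B A) {p : X}
    (hp : p ∈ A ∪ B) : setDist A B ≤ dist p (T p) := by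
  rcases hp with hp | hp
  · exact setDist_le_dist hp (hTA hp)
  · exact (setDist_le_dist (hTB hp) hp).trans_eq (dist_comm _ _)

theorem dist_image_image_le_mul_add {k : ℝ} (hTA : MapsTo T A B) (hTB : MapsTo T B A)
    (hcontr : ∀ x ∈ A, ∀ y ∈ B, dist (T x) (T y) ≤ k * dist x y + (1 - k) * setDist A B)
    {p : X} (hp : p ∈ A ∪ B) :
    dist (T p) (T (T p)) ≤ k * dist p (T p) + (1 - k) * setDist A B := by
  rcases hp with hp | hp
  · exact hcontr p hp (T p) (hTA hp)
  · simpa only [dist_comm] using hcontr (T p) (hTB hp) p hp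

theorem dist_image_image_le (hT : CyclicContraction A B T) {p : X} (hp : p ∈ A ∪ B) :
    dist (T p) (T (T p)) ≤ dist p (T p) := by
  obtain ⟨hTA, hTB, k, -, hk₁, hcontr⟩ := hT
  have hD := setDist_le_dist_self_image hTA hTB hp
  calc dist (T p) (T (T p)) ≤ k * dist p (T p) + (1 - k) * setDist A B :=
        dist_image_image_le_mul_add hTA hTB hcontr hp
    _ ≤ dist p (T p) := by nlinarith

theorem mapsTo_union (hT : CyclicContraction A B T) : MapsTo T (A ∪ B) (A ∪ B) :=
  union_comm B A ▸ hT.1.union_union hT.2.1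

theorem antitone_dist_iterate (hT : CyclicContraction A B T) {x : X} (hx : x ∈ A ∪ B) :
    Antitone fun n => dist (T^[n] x) (T (T^[n] x)) :=
  antitone_nat_of_succ_le fun n => by
    simpa only [Function.iterate_succ_apply'] using
      hT.dist_image_image_le (hT.mapsTo_union.iterate n hx)

theorem tendsto_dist_iterate (hT : CyclicContraction A B T) {x : X} (hx : x ∈ A ∪ B) :
    Tendsto (fun n => dist (T^[n] x) (T (T^[n] x))) atTop (𝓝 (setDist A B)) := by
  have hmem : ∀ n, T^[n] x ∈ A ∪ B := fun n => hT.mapsTo_union.iterate n hx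
  obtain ⟨hTA, hTB, k, hk₀, hk₁, hcontr⟩ := hT
  refine tendsto_of_le_mul_add_one_sub_mul hk₀.le hk₁
    (fun n => setDist_le_dist_self_image hTA hTB (hmem n)) fun n => ?_
  simpa only [Function.iterate_succ_apply'] using
    dist_image_image_le_mul_add hTA hTB hcontr (hmem n)

theorem iterate_two_mul_mem (hT : CyclicContraction A B T) {x : X} (hx : x ∈ A) (n : ℕ) :
    T^[2 * n] x ∈ A := by
  rw [Function.iterate_mul]
  exact (hT.2.1.comp hT.1).iterate n hx

theorem iterate_two_mul_add_one_mem (hT : CyclicContraction A B T) {x : X} (hx : x ∈ A)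
    (n : ℕ) : T^[2 * n + 1] x ∈ B := by
  rw [Function.iterate_succ_apply']
  exact hT.1 (hT.iterate_two_mul_mem hx n)

theorem isBounded_image_setOf_dist_le (hT : CyclicContraction A B T) (hA : A.Nonempty) (c : ℝ) :
    Bornology.IsBounded (T '' {y ∈ B | dist y (T y) ≤ c}) := by
  obtain ⟨x, hx⟩ := hA
  obtain ⟨-, -, k, hk₀, hk₁, hcontr⟩ := hT
  refine (isBounded_closedBall (x := T x)
    (r := k * (dist x (T x) + c) / (1 - k) + setDist A B)).subset ?_
  -- solve `d(Tx,Ty) ≤ k (d(x,Tx) + d(Tx,Ty) + d(Ty,y)) + (1-k) dist(A,B)` for `d(Tx,Ty)`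
  rintro _ ⟨y, ⟨hy, hyc⟩, rfl⟩
  rw [mem_closedBall, dist_comm, div_add' _ _ _ (by linarith), le_div_iff₀ (by linarith)]
  have hxy := mul_le_mul_of_nonneg_left (dist_triangle4 x (T x) (T y) y) hk₀.le
  rw [dist_comm (T y) y] at hxy
  nlinarith [hcontr x hx y hy]

theorem isBounded_range_iterate_two_mul (hT : CyclicContraction A B T) {x : X} (hx : x ∈ A) :
    Bornology.IsBounded (range fun n => T^[2 * n] x) := by
  refine ((hT.isBounded_image_setOf_dist_le ⟨x, hx⟩ (dist x (T x))).insert x).subset ?_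
  rintro _ ⟨_ | n, rfl⟩
  · exact mem_insert _ _
  refine mem_insert_of_mem _ ⟨T^[2 * n + 1] x, ⟨hT.iterate_two_mul_add_one_mem hx n,
    hT.antitone_dist_iterate (Or.inl hx) (Nat.zero_le _)⟩, ?_⟩
  rw [← Function.iterate_succ_apply' T]
  rfl

theorem isBestProximityPoint_of_tendsto (hT : CyclicContraction A B T) {z : X} (hz : z ∈ A)
    {y : ℕ → X} (hy : ∀ n, y n ∈ B) (hTy : Tendsto (fun n => T (y n)) atTop (𝓝 z))
    (hd : Tendsto (fun n => dist (y n) (T (y n))) atTop (𝓝 (setDist A B))) :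
    IsBestProximityPoint A B T z := by
  obtain ⟨hTA, -, k, hk₀, -, hcontr⟩ := hT
  refine le_antisymm ?_ (setDist_le_dist hz (hTA hz))
  have hbound : ∀ n, dist z (T z) ≤
      (1 + k) * dist z (T (y n)) + k * (dist (y n) (T (y n)) - setDist A B) + setDist A B := by
    intro n
    have hzTz := dist_triangle z (T (y n)) (T z)
    have hzy := mul_le_mul_of_nonneg_left (dist_triangle z (T (y n)) (y n)) hk₀.le
    rw [dist_comm (T (y n)) (T z)] at hzTz
    rw [dist_comm (T (y n)) (y n)] at hzy
    linarith [hcontr z hz (y n) (hy n)]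
  have hlim : Tendsto (fun n => (1 + k) * dist z (T (y n)) +
      k * (dist (y n) (T (y n)) - setDist A B) + setDist A B) atTop (𝓝 (setDist A B)) := by
    have h₀ : Tendsto (fun n => dist z (T (y n))) atTop (𝓝 0) := by
      simpa using (tendsto_const_nhds (x := z)).dist hTy
    simpa using ((h₀.const_mul (1 + k)).add
      ((hd.sub_const (setDist A B)).const_mul k)).add_const (setDist A B)
  exact ge_of_tendsto' hlim hbound

theorem isBestProximityPoint_of_mapClusterPt (hT : CyclicContraction A B T) {x z : X}
    (hx : x ∈ A) (hz : z ∈ A) (hcl : MapClusterPt z atTop fun n => T^[2 * n] x) :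
    IsBestProximityPoint A B T z := by
  have hshift : MapClusterPt z atTop fun n => T (T^[2 * n + 1] x) := by
    have : (fun n => T (T^[2 * n + 1] x)) = (fun n => T^[2 * n] x) ∘ (· + 1) := by
      funext n
      exact (Function.iterate_succ_apply' T _ x).symm
    rwa [this, mapClusterPt_comp, map_add_atTop_eq_nat]
  obtain ⟨φ, hφ, hφz⟩ := hshift.tendsto_subseq
  exact hT.isBestProximityPoint_of_tendsto hz (fun n => hT.iterate_two_mul_add_one_mem hx (φ n))
    hφz <| (hT.tendsto_dist_iterate (Or.inl hx)).comp <|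
      tendsto_atTop_mono (fun n => by omega) hφ.tendsto_atTop

theorem closure_range_iterate_two_mul_subset (hT : CyclicContraction A B T)
    (hAclosed : IsClosed A) {x : X} (hx : x ∈ A) :
    closure (range fun n => T^[2 * n] x) ⊆ A :=
  hAclosed.closure_subset_iff.2 (range_subset_iff.2 (hT.iterate_two_mul_mem hx))

theorem isCompact_closure_range_iterate_two_mul (hT : CyclicContraction A B T)
    (hAclosed : IsClosed A) (hcomp : BoundedlyCompact A) {x : X} (hx : x ∈ A) :
    IsCompact (closure (range fun n => T^[2 * n] x)) :=
  hcomp _ (hT.closure_range_iterate_two_mul_subset hAclosed hx) isClosed_closure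
    (hT.isBounded_range_iterate_two_mul hx).closure

theorem exists_isBestProximityPoint (hT : CyclicContraction A B T) (hAclosed : IsClosed A)
    (hcomp : BoundedlyCompact A) (hA : A.Nonempty) : ∃ z ∈ A, IsBestProximityPoint A B T z := by
  obtain ⟨x, hx⟩ := hA
  have hK := hT.isCompact_closure_range_iterate_two_mul hAclosed hcomp hx
  have hKA := hT.closure_range_iterate_two_mul_subset hAclosed hx
  obtain ⟨z, hzK, hz⟩ := hK.exists_mapClusterPt_of_frequently
    (Frequently.of_forall (f := atTop) fun n => subset_closure (mem_range_self n))
  exact ⟨z, hKA hzK, hT.isBestProximityPoint_of_mapClusterPt hx (hKA hzK) hz⟩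

theorem tendsto_iterate_two_mul (hT : CyclicContraction A B T) (hAclosed : IsClosed A)
    (hcomp : BoundedlyCompact A) {x z : X} (hx : x ∈ A)
    (huniq : ∀ z' ∈ A, IsBestProximityPoint A B T z' → z' = z) :
    Tendsto (fun n => T^[2 * n] x) atTop (𝓝 z) := by
  have hK := hT.isCompact_closure_range_iterate_two_mul hAclosed hcomp hx
  have hKA := hT.closure_range_iterate_two_mul_subset hAclosed hx
  exact hK.tendsto_nhds_of_unique_mapClusterPt
    (Eventually.of_forall fun n => subset_closure (mem_range_self n)) fun z' hz'K hz' =>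
      huniq z' (hKA hz'K) (hT.isBestProximityPoint_of_mapClusterPt hx (hKA hz'K) hz')

end CyclicContraction

namespace IsBestProximityPoint

theorem image_image_eq (hT : CyclicContraction A B T) (hcheb : ChebyshevForProximinal A B)
    {z : X} (hz : z ∈ A) (hzD : IsBestProximityPoint A B T z) : T (T z) = z := by
  have hTz : T z ∈ B := hT.1 hz
  have hTzD : dist (T z) (T (T z)) = setDist A B :=
    le_antisymm ((hT.dist_image_image_le (Or.inl hz)).trans_eq hzD)
      (CyclicContraction.setDist_le_dist_self_image hT.1 hT.2.1 (Or.inr hTz))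
  exact hcheb.eq_of_dist_eq_setDist (hT.2.1 hTz) hz hTz hTzD ((dist_comm _ _).trans hzD)

theorem eq (hT : CyclicContraction A B T) (hcheb : ChebyshevForProximinal A B) {z z' : X}
    (hz : z ∈ A) (hz' : z' ∈ A) (h : IsBestProximityPoint A B T z)
    (h' : IsBestProximityPoint A B T z') : z = z' := by
  have hzz := h.image_image_eq hT hcheb hz
  have hzz' := h'.image_image_eq hT hcheb hz'
  obtain ⟨hTA, -, k, -, hk₁, hcontr⟩ := hT
  have hu := hcontr z' hz' (T z) (hTA hz)
  have hv := hcontr z hz (T z') (hTA hz')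
  rw [hzz, dist_comm] at hu
  rw [hzz', dist_comm] at hv
  have hDu := setDist_le_dist hz (hTA hz')
  have hDv := setDist_le_dist hz' (hTA hz)
  have hzTz' : dist (T z') z = setDist A B := by rw [dist_comm]; nlinarith
  exact hcheb.eq_of_dist_eq_setDist hz hz' (hTA hz') hzTz' ((dist_comm _ _).trans h')

end IsBestProximityPoint

end BestProximity

theorem best_proximity_of_boundedly_compact_general {X : Type*} [MetricSpace X]
    (A B : Set X) (hA : A.Nonempty)
    (hAclosed : IsClosed A)
    (T : X → X) (hT : CyclicContraction A B T)
    (hcomp : BoundedlyCompact A) (hcheb : ChebyshevForProximinal A B) :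
    ∃ z ∈ A, dist z (T z) = setDist A B ∧
      (∀ z' ∈ A, dist z' (T z') = setDist A B → z' = z) ∧
      ∀ x ∈ A, Tendsto (fun n => T^[2 * n] x) atTop (nhds z) := by
  obtain ⟨z, hzA, hz⟩ := hT.exists_isBestProximityPoint hAclosed hcomp hA
  have huniq : ∀ z' ∈ A, IsBestProximityPoint A B T z' → z' = z :=
    fun z' hz' h => h.eq hT hcheb hz' hzA hz
  exact ⟨z, hzA, hz, huniq, fun x hx => hT.tendsto_iterate_two_mul hAclosed hcomp hx huniq⟩

theorem best_proximity_of_boundedly_compact {X : Type*} [MetricSpace X]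
    (A B : Set X) (hA : A.Nonempty) (hB : B.Nonempty)
    (hAclosed : IsClosed A) (hBclosed : IsClosed B)
    (T : X → X) (hT : CyclicContraction A B T)
    (hcomp : BoundedlyCompact A) (hcheb : ChebyshevForProximinal A B) :
    ∃ z ∈ A, dist z (T z) = setDist A B ∧
      (∀ z' ∈ A, dist z' (T z') = setDist A B → z' = z) ∧
      ∀ x ∈ A, Tendsto (fun n => T^[2 * n] x) atTop (nhds z) :=
  best_proximity_of_boundedly_compact_general A B hA hAclosed T hT hcomp hcheb
end

section
/- Let (X,d) be a metric space and let A and B be two nonempty subsets of X such that the pair (A,B) satisfies property WUC. Assume that A is complete. Let T be a cyclic contraction on A∪B. Then T has a unique best proximity point z in A, and the sequence {T^{2n}x} converges to z for every x ∈ A. -/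
/-!
The contraction inequality, iterated, gives
`d(Tᵖa, Tᵖb) ≤ kᵖ d(a, b) + (1 - kᵖ) dist(A, B)`. Since the orbit `T²ⁿx` stays at bounded distance
from `Tx`, its tail lies within `dist(A, B) + ε` of the single point `T²ⁿ⁰(Tx) ∈ B`, so WUC makes it
converge, and passing to the limit in the contraction inequality shows the limit is a best proximity
point. Uniqueness, and the fact that `T ∘ T` fixes best proximity points, come from WUC applied to an
alternating sequence: two points of `A` within `dist(A, B)` of the same point of `B` coincide.
-/

open Filter Metric

/-- Property WUC for a pair of subsets of a metric space. -/
def PropWUC {X : Type*} [MetricSpace X] (A B : Set X) : Prop :=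
  ∀ x : ℕ → X, (∀ n, x n ∈ A) →
    (∀ ε > (0 : ℝ), ∃ y ∈ B, ∃ m₀ : ℕ, ∀ m ≥ m₀, dist (x m) y ≤ setDist A B + ε) →
    ∃ z, Tendsto x atTop (nhds z)

open Set Topology

section SetDist

variable {X : Type*} [PseudoMetricSpace X] {A B : Set X}

lemma setDist_le_dist_s7 {x y : X} (hx : x ∈ A) (hy : y ∈ B) : setDist A B ≤ dist x y :=
  csInf_le ⟨0, by rintro r ⟨a, -, b, -, rfl⟩; exact dist_nonneg⟩ (mem_image2_of_mem hx hy)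

lemma setDist_nonneg : 0 ≤ setDist A B :=
  Real.sInf_nonneg (by rintro r ⟨a, -, b, -, rfl⟩; exact dist_nonneg)

lemma setDist_comm : setDist A B = setDist B A := by
  unfold setDist
  rw [image2_swap]
  simp_rw [dist_comm]

end SetDist

lemma PropWUC.eq_of_dist_le {X : Type*} [MetricSpace X] {A B : Set X} (hWUC : PropWUC A B)
    {a b y : X} (ha : a ∈ A) (hb : b ∈ A) (hy : y ∈ B)
    (hay : dist a y ≤ setDist A B) (hby : dist b y ≤ setDist A B) : a = b := by
  set u : ℕ → X := fun m => if Even m then a else b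
  obtain ⟨L, hL⟩ := hWUC u (fun m => by dsimp [u]; split_ifs <;> assumption)
    fun ε hε => ⟨y, hy, 0, fun m _ => by dsimp [u]; split_ifs <;> linarith⟩
  have heven : Tendsto (fun _ : ℕ => a) atTop (𝓝 L) := by
    simpa [u, Function.comp_def] using
      hL.comp (strictMono_nat_of_lt_succ fun n => by omega : StrictMono (2 * ·)).tendsto_atTop
  have hodd : Tendsto (fun _ : ℕ => b) atTop (𝓝 L) := by
    simpa [u, Function.comp_def] using
      hL.comp (strictMono_nat_of_lt_succ fun n => by omega : StrictMono (2 * · + 1)).tendsto_atTop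
  rw [tendsto_const_nhds_iff.mp heven, tendsto_const_nhds_iff.mp hodd]

lemma le_max_div_of_le_mul_add {u : ℕ → ℝ} {q c : ℝ} (hq0 : 0 ≤ q) (hq1 : q < 1)
    (hu : ∀ n, u (n + 1) ≤ q * u n + c) (n : ℕ) : u n ≤ max (u 0) (c / (1 - q)) := by
  induction n with
  | zero => exact le_max_left _ _
  | succ n ih =>
    have hc : c ≤ (1 - q) * max (u 0) (c / (1 - q)) :=
      (div_le_iff₀' (sub_pos.mpr hq1)).mp (le_max_right _ _)
    nlinarith [hu n]

lemma tendsto_pow_two_mul_atTop_nhds_zero {k : ℝ} (hk0 : 0 ≤ k) (hk1 : k < 1) :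
    Tendsto (fun n : ℕ => k ^ (2 * n)) atTop (𝓝 0) := by
  simp_rw [pow_mul]
  exact tendsto_pow_atTop_nhds_zero_of_lt_one (sq_nonneg k) (by nlinarith)

/-- `CyclicContraction` with the constant `k` fixed, so that `A` and `B` can be swapped. -/
structure IsCyclicContractionWith {X : Type*} [PseudoMetricSpace X] (A B : Set X) (T : X → X)
    (k : ℝ) : Prop where
  mapsTo_left : MapsTo T A B
  mapsTo_right : MapsTo T B A
  dist_le : ∀ x ∈ A, ∀ y ∈ B, dist (T x) (T y) ≤ k * dist x y + (1 - k) * setDist A B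

namespace IsCyclicContractionWith

section PseudoMetric

variable {X : Type*} [PseudoMetricSpace X] {A B : Set X} {T : X → X} {k : ℝ}
  (hT : IsCyclicContractionWith A B T k)
include hT

lemma symm : IsCyclicContractionWith B A T k where
  mapsTo_left := hT.mapsTo_right
  mapsTo_right := hT.mapsTo_left
  dist_le x hx y hy := by
    rw [dist_comm, dist_comm x, ← setDist_comm]
    exact hT.dist_le y hy x hx

lemma mapsTo_iterate_two_mul (n : ℕ) : MapsTo T^[2 * n] A A := by
  rw [Function.iterate_mul]
  exact (hT.mapsTo_right.comp hT.mapsTo_left).iterate n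

lemma mapsTo_iterate_two_mul_add_one (n : ℕ) : MapsTo T^[2 * n + 1] A B := by
  rw [Function.iterate_succ']
  exact hT.mapsTo_left.comp (hT.mapsTo_iterate_two_mul n)

lemma dist_iterate_le (hk : 0 ≤ k) (p : ℕ) {x y : X} (hx : x ∈ A) (hy : y ∈ B) :
    dist (T^[p] x) (T^[p] y) ≤ k ^ p * dist x y + (1 - k ^ p) * setDist A B := by
  induction p generalizing A B x y with
  | zero => simp
  | succ p ih =>
    have h := ih hT.symm (hT.mapsTo_left hx) (hT.mapsTo_right hy)
    rw [← setDist_comm] at h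
    rw [Function.iterate_succ_apply, Function.iterate_succ_apply]
    calc _ ≤ k ^ p * dist (T x) (T y) + (1 - k ^ p) * setDist A B := h
      _ ≤ k ^ p * (k * dist x y + (1 - k) * setDist A B) + (1 - k ^ p) * setDist A B := by
        gcongr
        exact hT.dist_le x hx y hy
      _ = _ := by ring

lemma exists_forall_dist_iterate_two_mul_le (hk0 : 0 ≤ k) (hk1 : k < 1) {x : X} (hx : x ∈ A) :
    ∃ M, ∀ n, dist (T^[2 * n] x) (T x) ≤ M := by
  refine ⟨_, le_max_div_of_le_mul_add (sq_nonneg k) (by nlinarith)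
    (c := (1 - k ^ 2) * setDist A B + dist (T^[2] (T x)) (T x)) fun n => ?_⟩
  rw [show 2 * (n + 1) = 2 + 2 * n by ring, Function.iterate_add_apply]
  calc _ ≤ dist (T^[2] (T^[2 * n] x)) (T^[2] (T x)) + dist (T^[2] (T x)) (T x) :=
        dist_triangle _ _ _
    _ ≤ _ := by
      linarith [hT.dist_iterate_le hk0 2 (hT.mapsTo_iterate_two_mul n hx) (hT.mapsTo_left hx)]

lemma exists_forall_ge_dist_iterate_two_mul_le (hk0 : 0 ≤ k) (hk1 : k < 1) {x : X} (hx : x ∈ A)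
    {ε : ℝ} (hε : 0 < ε) :
    ∃ y ∈ B, ∃ m₀ : ℕ, ∀ m ≥ m₀, dist (T^[2 * m] x) y ≤ setDist A B + ε := by
  obtain ⟨M, hM⟩ := hT.exists_forall_dist_iterate_two_mul_le hk0 hk1 hx
  obtain ⟨n₀, hn₀⟩ := (((tendsto_pow_two_mul_atTop_nhds_zero hk0 hk1).mul_const M).eventually
    (gt_mem_nhds (by simpa using hε))).exists
  refine ⟨T^[2 * n₀] (T x), hT.symm.mapsTo_iterate_two_mul n₀ (hT.mapsTo_left hx), n₀,
    fun m hm => ?_⟩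
  have h := hT.dist_iterate_le hk0 (2 * n₀)
    (hT.mapsTo_iterate_two_mul (m - n₀) hx) (hT.mapsTo_left hx)
  rw [← Function.iterate_add_apply, show 2 * n₀ + 2 * (m - n₀) = 2 * m by omega] at h
  have hk : 0 ≤ k ^ (2 * n₀) := by positivity
  nlinarith [hM (m - n₀), setDist_nonneg (A := A) (B := B)]

lemma dist_apply_le_setDist_of_tendsto (hk0 : 0 ≤ k) (hk1 : k < 1) {x z : X} (hx : x ∈ A)
    (hz : z ∈ A) (hlim : Tendsto (fun n => T^[2 * n] x) atTop (𝓝 z)) :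
    dist z (T z) ≤ setDist A B := by
  set d := setDist A B
  have hu : Tendsto (fun n => dist (T^[2 * (n + 1)] x) (T z)) atTop (𝓝 (dist z (T z))) :=
    ((hlim.comp (tendsto_add_atTop_nat 1)).dist tendsto_const_nhds :)
  have hv : Tendsto (fun n => k * (k ^ (2 * n) * dist x (T x) + (1 - k ^ (2 * n)) * d +
      dist (T^[2 * n] x) z) + (1 - k) * d) atTop
      (𝓝 (k * (0 * dist x (T x) + (1 - 0) * d + dist z z) + (1 - k) * d)) := by
    have hpow := tendsto_pow_two_mul_atTop_nhds_zero hk0 hk1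
    exact ((((hpow.mul_const _).add ((tendsto_const_nhds.sub hpow).mul_const _)).add
      (hlim.dist tendsto_const_nhds)).const_mul k).add_const _
  refine le_of_le_of_eq (le_of_tendsto_of_tendsto' hu hv fun n => ?_) (by simp [d]; ring)
  have hcons : dist (T^[2 * n] x) (T^[2 * n + 1] x) ≤
      k ^ (2 * n) * dist x (T x) + (1 - k ^ (2 * n)) * d := by
    rw [Function.iterate_succ_apply]
    exact hT.dist_iterate_le hk0 (2 * n) hx (hT.mapsTo_left hx)
  calc dist (T^[2 * (n + 1)] x) (T z) = dist (T z) (T (T^[2 * n + 1] x)) := by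
        rw [dist_comm, show 2 * (n + 1) = 2 * n + 1 + 1 by ring, Function.iterate_succ_apply']
    _ ≤ k * dist z (T^[2 * n + 1] x) + (1 - k) * d :=
        hT.dist_le z hz _ (hT.mapsTo_iterate_two_mul_add_one n hx)
    _ ≤ k * (dist (T^[2 * n] x) (T^[2 * n + 1] x) + dist (T^[2 * n] x) z) + (1 - k) * d := by
        gcongr
        linarith [dist_triangle_left z (T^[2 * n + 1] x) (T^[2 * n] x)]
    _ ≤ _ := by gcongr

end PseudoMetric

section Metric

variable {X : Type*} [MetricSpace X] {A B : Set X} {T : X → X} {k : ℝ}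
  (hT : IsCyclicContractionWith A B T k)
include hT

lemma exists_dist_apply_eq_setDist_tendsto (hk0 : 0 ≤ k) (hk1 : k < 1) (hWUC : PropWUC A B)
    (hA : IsClosed A) {x : X} (hx : x ∈ A) :
    ∃ z ∈ A, dist z (T z) = setDist A B ∧ Tendsto (fun n => T^[2 * n] x) atTop (𝓝 z) := by
  obtain ⟨z, hlim⟩ := hWUC _ (fun n => hT.mapsTo_iterate_two_mul n hx)
    fun ε hε => hT.exists_forall_ge_dist_iterate_two_mul_le hk0 hk1 hx hε
  have hz : z ∈ A := hA.mem_of_tendsto hlim (.of_forall fun n => hT.mapsTo_iterate_two_mul n hx)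
  exact ⟨z, hz, le_antisymm (hT.dist_apply_le_setDist_of_tendsto hk0 hk1 hx hz hlim)
    (setDist_le_dist_s7 hz (hT.mapsTo_left hz)), hlim⟩

lemma apply_apply_eq_of_dist_eq (hWUC : PropWUC A B) {w : X} (hw : w ∈ A)
    (hwd : dist w (T w) = setDist A B) : T (T w) = w := by
  refine hWUC.eq_of_dist_le (hT.mapsTo_right (hT.mapsTo_left hw)) hw (hT.mapsTo_left hw) ?_ hwd.le
  have h := hT.dist_le w hw (T w) (hT.mapsTo_left hw)
  rw [hwd] at h
  rw [dist_comm]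
  linarith

lemma eq_of_dist_eq (hk1 : k < 1) (hWUC : PropWUC A B) {z₁ z₂ : X} (hz₁ : z₁ ∈ A)
    (hz₂ : z₂ ∈ A) (hd₁ : dist z₁ (T z₁) = setDist A B) (hd₂ : dist z₂ (T z₂) = setDist A B) :
    z₁ = z₂ := by
  have h₁₂ := hT.dist_le z₁ hz₁ (T z₂) (hT.mapsTo_left hz₂)
  have h₂₁ := hT.dist_le z₂ hz₂ (T z₁) (hT.mapsTo_left hz₁)
  rw [hT.apply_apply_eq_of_dist_eq hWUC hz₂ hd₂, dist_comm] at h₁₂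
  rw [hT.apply_apply_eq_of_dist_eq hWUC hz₁ hd₁, dist_comm] at h₂₁
  have hge₁₂ := setDist_le_dist_s7 hz₁ (hT.mapsTo_left hz₂)
  have hge₂₁ := setDist_le_dist_s7 hz₂ (hT.mapsTo_left hz₁)
  refine hWUC.eq_of_dist_le hz₁ hz₂ (hT.mapsTo_left hz₁) hd₁.le ?_
  nlinarith

end Metric

end IsCyclicContractionWith

theorem best_proximity_of_prop_WUC_general {X : Type*} [MetricSpace X] (A B : Set X)
    (hA : A.Nonempty) (hWUC : PropWUC A B)
    (hAcomplete : IsComplete A) (T : X → X) (hT : CyclicContraction A B T) :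
    ∃ z ∈ A, dist z (T z) = setDist A B ∧
      (∀ z' ∈ A, dist z' (T z') = setDist A B → z' = z) ∧
      ∀ x ∈ A, Tendsto (fun n => T^[2 * n] x) atTop (nhds z) := by
  obtain ⟨hTA, hTB, k, hk0, hk1, hk⟩ := hT
  have hT : IsCyclicContractionWith A B T k := ⟨hTA, hTB, hk⟩
  obtain ⟨x₀, hx₀⟩ := hA
  obtain ⟨z, hzA, hz, -⟩ :=
    hT.exists_dist_apply_eq_setDist_tendsto hk0.le hk1 hWUC hAcomplete.isClosed hx₀
  refine ⟨z, hzA, hz, fun z' hz'A hz' => hT.eq_of_dist_eq hk1 hWUC hz'A hzA hz' hz,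
    fun x hx => ?_⟩
  obtain ⟨w, hwA, hw, hlim⟩ :=
    hT.exists_dist_apply_eq_setDist_tendsto hk0.le hk1 hWUC hAcomplete.isClosed hx
  rwa [hT.eq_of_dist_eq hk1 hWUC hwA hzA hw hz] at hlim

theorem best_proximity_of_prop_WUC {X : Type*} [MetricSpace X] (A B : Set X)
    (hA : A.Nonempty) (hB : B.Nonempty) (hWUC : PropWUC A B)
    (hAcomplete : IsComplete A) (T : X → X) (hT : CyclicContraction A B T) :
    ∃ z ∈ A, dist z (T z) = setDist A B ∧
      (∀ z' ∈ A, dist z' (T z') = setDist A B → z' = z) ∧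
      ∀ x ∈ A, Tendsto (fun n => T^[2 * n] x) atTop (nhds z) :=
  best_proximity_of_prop_WUC_general A B hA hWUC hAcomplete T hT
end
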